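/- arXiv:2012.03800 — 3 statements merged into one kernel-verified Lean document; each statement's English description precedes it below -/
import Mathlib

section
/- In the multiple-purchase model, suppose products 1,…,n are indexed so that r_1λ_1/(1−c_1) > r_2λ_2/(1−c_2) > ⋯ > r_nλ_n/(1−c_n), with c_j ∈ [0,1). Let H_k^{n−k+1} be the maximum of R(σ, n−k+1) over rankings σ of all products {k, k+1, …, n}. Then for all 1 ≤ k ≤ n, r_k λ_k / (1 − c_k) ≥ H_k^{n−k+1}. -/
/-! Every product `j ∈ {k,…,n}` has ratio `r_j λ_j / (1 - c_j)` at most `M := r_k λ_k / (1 - c_k)`,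
i.e. `λ_j r_j ≤ M (1 - c_j)`. Summed along any ranking with continuation products `P_i`, the
revenue is then at most `∑ (M P_i - M P_{i+1})`, which telescopes to `M (1 - P_x) ≤ M`. -/

noncomputable def revM (lam r c : ℕ → ℝ) (σ : ℕ → ℕ) (x : ℕ) : ℝ :=
  ∑ k ∈ Finset.range x, (∏ i ∈ Finset.range k, c (σ i)) * (lam (σ k) * r (σ k))

open Finset

theorem antitoneOn_Icc_of_succ_le {α : Type*} [Preorder α] {f : ℕ → α} {a n : ℕ}
    (hf : ∀ j, a ≤ j → j < n → f (j + 1) ≤ f j) : AntitoneOn f (Set.Icc a n) := by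
  intro i hi j hj hij
  induction j, hij using Nat.le_induction with
  | base => exact le_rfl
  | succ j hij ih =>
    exact (hf j (hi.1.trans hij) hj.2).trans (ih ⟨hi.1.trans hij, Nat.le_of_succ_le hj.2⟩)

theorem revM_le_mul_one_sub_prod {lam r c : ℕ → ℝ} {σ : ℕ → ℕ} {M : ℝ} {x : ℕ}
    (hc : ∀ i < x, 0 ≤ c (σ i))
    (hbound : ∀ i < x, lam (σ i) * r (σ i) ≤ M * (1 - c (σ i))) :
    revM lam r c σ x ≤ M * (1 - ∏ i ∈ range x, c (σ i)) := by
  induction x with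
  | zero => simp [revM]
  | succ x ih =>
    have hprod : 0 ≤ ∏ i ∈ range x, c (σ i) :=
      prod_nonneg fun i hi => hc i (Nat.lt_succ_of_lt (mem_range.mp hi))
    have hstep := mul_le_mul_of_nonneg_left (hbound x x.lt_succ_self) hprod
    have hprev := ih (fun i hi => hc i (Nat.lt_succ_of_lt hi))
      (fun i hi => hbound i (Nat.lt_succ_of_lt hi))
    unfold revM at hprev ⊢
    rw [sum_range_succ, prod_range_succ]
    linarith

theorem revM_le_of_le_mul_one_sub {lam r c : ℕ → ℝ} {σ : ℕ → ℕ} {M : ℝ} {x : ℕ} (hM : 0 ≤ M)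
    (hc : ∀ i < x, 0 ≤ c (σ i))
    (hbound : ∀ i < x, lam (σ i) * r (σ i) ≤ M * (1 - c (σ i))) :
    revM lam r c σ x ≤ M := by
  have hprod : 0 ≤ M * ∏ i ∈ range x, c (σ i) :=
    mul_nonneg hM (prod_nonneg fun i hi => hc i (mem_range.mp hi))
  linarith [revM_le_mul_one_sub_prod hc hbound]

/-- In the multiple-purchase model with products indexed by strictly descending
`rλ/(1-c)`, the optimal revenue `H_k^{n-k+1}` from ranking all products `{k,…,n}`
is at most `r_k λ_k / (1 - c_k)`. -/
theorem stmt12 (n k : ℕ) (lam r c : ℕ → ℝ)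
    (hk1 : 1 ≤ k) (hkn : k ≤ n)
    (hlam : ∀ j ∈ Finset.Icc 1 n, 0 < lam j ∧ lam j ≤ 1)
    (hr : ∀ j ∈ Finset.Icc 1 n, 0 < r j)
    (hc : ∀ j ∈ Finset.Icc 1 n, 0 ≤ c j ∧ c j < 1)
    (hdesc : ∀ j, 1 ≤ j → j < n →
      r (j + 1) * lam (j + 1) / (1 - c (j + 1)) < r j * lam j / (1 - c j))
    (H : ℝ)
    (hH : IsGreatest {v | ∃ σ : ℕ → ℕ, Set.InjOn σ (Set.Iio (n - k + 1)) ∧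
      (∀ i < n - k + 1, σ i ∈ Finset.Icc k n) ∧ v = revM lam r c σ (n - k + 1)} H) :
    r k * lam k / (1 - c k) ≥ H := by
  have hk : k ∈ Icc 1 n := mem_Icc.mpr ⟨hk1, hkn⟩
  have hsub : ∀ j ∈ Icc k n, j ∈ Icc 1 n := fun j hj =>
    mem_Icc.mpr ⟨hk1.trans (mem_Icc.mp hj).1, (mem_Icc.mp hj).2⟩
  obtain ⟨⟨σ, -, hσ, rfl⟩, -⟩ := hH
  have hM : 0 ≤ r k * lam k / (1 - c k) :=
    div_nonneg (mul_nonneg (hr k hk).le (hlam k hk).1.le) (sub_nonneg.mpr (hc k hk).2.le)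
  refine revM_le_of_le_mul_one_sub hM (fun i hi => (hc _ (hsub _ (hσ i hi))).1) fun i hi => ?_
  obtain ⟨hkj, hjn⟩ := mem_Icc.mp (hσ i hi)
  have hci := (hc _ (hsub _ (hσ i hi))).2
  have hratio := antitoneOn_Icc_of_succ_le (f := fun j => r j * lam j / (1 - c j))
    (fun j h1 h2 => (hdesc j h1 h2).le) ⟨hk1, hkn⟩ ⟨hk1.trans hkj, hjn⟩ hkj
  rw [div_le_iff₀ (sub_pos.mpr hci)] at hratio
  linarith [mul_comm (lam (σ i)) (r (σ i))]
end

section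
/- Let λ : {1,…,n} → (0,1], r : {1,…,n} → (0,∞), and for j ≤ n and 0 ≤ k define H_j^k by the dynamic programming recursion H_j^0 = 0, H_{n+1}^k = 0, and H_j^k = max(λ_j r_j + (1−λ_j) H_{j+1}^{k−1}, H_{j+1}^k). Then H_j^x equals the maximum of R(σ, x) over all rankings σ consisting of x products from {j,…,n} displayed in increasing index order, where R(σ, x) = Σ_{k=1}^{x} Π_{i=1}^{k−1}(1−λ_{σ(i)}) λ_{σ(k)} r_{σ(k)}. -/
/-!
The recursion for `H_j^k` decides whether product `j` is shown first or skipped. Since a ranking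
in increasing index order either starts with `j` or uses only products from `{j+1,…,n}`, and
`R(j :: τ, x+1) = λ_j r_j + (1-λ_j) R(τ, x)`, induction on `n + 1 - j` shows that no ranking beats
`H_j^x` and that the maximizing branch is always realized by a ranking of exactly `x` products.
The only delicate case is when `{j+1,…,n}` has fewer than `x` products, so skipping `j` is
infeasible: then `H_{j+1}^x = H_{j+1}^{x-1}` and, the prices being decreasing, this value is at most
`r_j`, so showing `j` first is at least as good as skipping it.
-/

noncomputable def rev (lam r : ℕ → ℝ) (σ : ℕ → ℕ) (x : ℕ) : ℝ :=
  ∑ k ∈ Finset.range x, (∏ i ∈ Finset.range k, (1 - lam (σ i))) * (lam (σ k) * r (σ k))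

/-- Dynamic programming value function:
`H_j^0 = 0`, `H_{n+1}^k = 0`, `H_j^k = max(λ_j r_j + (1-λ_j) H_{j+1}^{k-1}, H_{j+1}^k)`. -/
noncomputable def Hdp (lam r : ℕ → ℝ) (n j k : ℕ) : ℝ :=
  if h : n + 1 ≤ j ∨ k = 0 then 0
  else max (lam j * r j + (1 - lam j) * Hdp lam r n (j + 1) (k - 1))
    (Hdp lam r n (j + 1) k)
termination_by n + 1 - j
decreasing_by all_goals omega

def IsRanking (j n x : ℕ) (σ : ℕ → ℕ) : Prop :=
  StrictMonoOn σ (Set.Iio x) ∧ ∀ i < x, σ i ∈ Finset.Icc j n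

theorem isRanking_zero (j n : ℕ) (σ : ℕ → ℕ) : IsRanking j n 0 σ :=
  ⟨fun a ha => by simp at ha, by simp⟩

theorem IsRanking.mono {j j' n x : ℕ} {σ : ℕ → ℕ} (hσ : IsRanking j' n x σ) (hj : j ≤ j') :
    IsRanking j n x σ :=
  ⟨hσ.1, fun i hi => Finset.Icc_subset_Icc hj le_rfl (hσ.2 i hi)⟩

theorem isRanking_succ_iff {j n x : ℕ} {σ : ℕ → ℕ} :
    IsRanking j n (x + 1) σ ↔
      σ 0 ∈ Finset.Icc j n ∧ IsRanking (σ 0 + 1) n x (fun i => σ (i + 1)) := by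
  simp only [IsRanking, Finset.mem_Icc]
  constructor
  · rintro ⟨hmono, hmem⟩
    have hfirst : ∀ i < x, σ 0 < σ (i + 1) := fun i hi =>
      hmono (by simp) (by simp; omega) (Nat.succ_pos i)
    refine ⟨hmem 0 (Nat.succ_pos x), fun a ha b hb hab => ?_,
      fun i hi => ⟨hfirst i hi, (hmem _ (by omega)).2⟩⟩
    exact hmono (by simp at ha ⊢; omega) (by simp at hb ⊢; omega) (by omega)
  · rintro ⟨hhead, htmono, htmem⟩
    refine ⟨fun a ha b hb hab => ?_, fun i hi => ?_⟩
    · obtain ⟨b, rfl⟩ : ∃ b', b = b' + 1 := ⟨b - 1, by omega⟩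
      simp only [Set.mem_Iio] at ha hb
      rcases a with _ | a
      · exact (htmem b (by omega)).1
      · exact htmono (by simp; omega) (by simp; omega) (by omega)
    · rcases i with _ | i
      · exact hhead
      · exact ⟨by have := (htmem i (by omega)).1; omega, (htmem i (by omega)).2⟩

theorem rev_zero (lam r : ℕ → ℝ) (σ : ℕ → ℕ) : rev lam r σ 0 = 0 := by
  simp [rev]

theorem rev_succ (lam r : ℕ → ℝ) (σ : ℕ → ℕ) (x : ℕ) :
    rev lam r σ (x + 1)
      = lam (σ 0) * r (σ 0) + (1 - lam (σ 0)) * rev lam r (fun i => σ (i + 1)) x := by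
  simp only [rev, Finset.sum_range_succ', Finset.prod_range_succ', Finset.prod_range_zero,
    Finset.mul_sum]
  rw [add_comm]
  congr 1
  · ring
  · exact Finset.sum_congr rfl fun k _ => by ring

section Hdp

variable {lam r : ℕ → ℝ} {n : ℕ}

theorem Hdp_zero (j : ℕ) : Hdp lam r n j 0 = 0 := by
  rw [Hdp]; simp

theorem Hdp_of_lt {j : ℕ} (k : ℕ) (hj : n < j) : Hdp lam r n j k = 0 := by
  rw [Hdp, dif_pos (Or.inl hj.nat_succ_le)]

theorem Hdp_succ {j : ℕ} (k : ℕ) (hj : j ≤ n) :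
    Hdp lam r n j (k + 1) = max (lam j * r j + (1 - lam j) * Hdp lam r n (j + 1) k)
      (Hdp lam r n (j + 1) (k + 1)) := by
  rw [Hdp, dif_neg (by omega), Nat.add_sub_cancel]

theorem Hdp_succ_of_le {j k : ℕ} (hk : n + 1 - j ≤ k) :
    Hdp lam r n j (k + 1) = Hdp lam r n j k := by
  rcases lt_or_ge n j with hj | hj
  · rw [Hdp_of_lt _ hj, Hdp_of_lt _ hj]
  obtain ⟨k, rfl⟩ : ∃ k', k = k' + 1 := ⟨k - 1, by omega⟩
  rw [Hdp_succ _ hj, Hdp_succ _ hj, Hdp_succ_of_le (j := j + 1) (k := k + 1) (by omega),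
    Hdp_succ_of_le (j := j + 1) (k := k) (by omega)]
termination_by n + 1 - j

theorem Hdp_le_of_forall_le {j : ℕ} (k : ℕ) {c : ℝ} (hc : 0 ≤ c)
    (hlam : ∀ p ∈ Finset.Icc j n, 0 ≤ lam p ∧ lam p ≤ 1) (hr : ∀ p ∈ Finset.Icc j n, r p ≤ c) :
    Hdp lam r n j k ≤ c := by
  rcases lt_or_ge n j with hj | hj
  · rw [Hdp_of_lt _ hj]; exact hc
  rcases k with _ | k
  · rw [Hdp_zero]; exact hc
  have hjmem : j ∈ Finset.Icc j n := Finset.mem_Icc.mpr ⟨le_rfl, hj⟩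
  have hsub : Finset.Icc (j + 1) n ⊆ Finset.Icc j n := Finset.Icc_subset_Icc (by omega) le_rfl
  have ih : ∀ k', Hdp lam r n (j + 1) k' ≤ c := fun k' =>
    Hdp_le_of_forall_le k' hc (fun p hp => hlam p (hsub hp)) (fun p hp => hr p (hsub hp))
  obtain ⟨hlam0, hlam1⟩ := hlam j hjmem
  rw [Hdp_succ _ hj]
  refine max_le ?_ (ih _)
  calc lam j * r j + (1 - lam j) * Hdp lam r n (j + 1) k
      ≤ lam j * c + (1 - lam j) * c := by
        gcongr
        exacts [hr j hjmem, ih k]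
    _ = c := by ring
termination_by n + 1 - j

theorem rev_le_Hdp {j x : ℕ} {σ : ℕ → ℕ} (hlam : ∀ p ∈ Finset.Icc j n, lam p ≤ 1)
    (hσ : IsRanking j n x σ) : rev lam r σ x ≤ Hdp lam r n j x := by
  rcases x with _ | x
  · rw [rev_zero, Hdp_zero]
  obtain ⟨hhead, htail⟩ := isRanking_succ_iff.mp hσ
  have hj : j ≤ n := (Finset.mem_Icc.mp hhead).1.trans (Finset.mem_Icc.mp hhead).2
  have hlam' : ∀ p ∈ Finset.Icc (j + 1) n, lam p ≤ 1 := fun p hp =>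
    hlam p (Finset.Icc_subset_Icc (by omega) le_rfl hp)
  rw [Hdp_succ _ hj]
  rcases (Finset.mem_Icc.mp hhead).1.eq_or_lt with hfirst | hskip
  · rw [rev_succ, ← hfirst]
    rw [← hfirst] at htail
    have htail_le := rev_le_Hdp hlam' htail
    have hlamj := hlam j (hfirst ▸ hhead)
    exact le_max_of_le_left (by gcongr)
  · refine le_max_of_le_right (rev_le_Hdp hlam' ?_)
    exact isRanking_succ_iff.mpr
      ⟨Finset.mem_Icc.mpr ⟨hskip, (Finset.mem_Icc.mp hhead).2⟩, htail⟩
termination_by n + 1 - j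

theorem Hdp_skip_le_take {j m : ℕ} (hj : j ≤ n) (hm : n - j ≤ m)
    (hlam : ∀ p ∈ Finset.Icc j n, 0 ≤ lam p ∧ lam p ≤ 1) (hr₀ : 0 ≤ r j)
    (hr : ∀ p ∈ Finset.Icc (j + 1) n, r p ≤ r j) :
    Hdp lam r n (j + 1) (m + 1) ≤ lam j * r j + (1 - lam j) * Hdp lam r n (j + 1) m := by
  rw [Hdp_succ_of_le (by omega)]
  have hsub : Finset.Icc (j + 1) n ⊆ Finset.Icc j n := Finset.Icc_subset_Icc (by omega) le_rfl
  have hle := Hdp_le_of_forall_le m hr₀ (fun p hp => hlam p (hsub hp)) hr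
  obtain ⟨hlam0, hlam1⟩ := hlam j (Finset.mem_Icc.mpr ⟨le_rfl, hj⟩)
  calc Hdp lam r n (j + 1) m
      = lam j * Hdp lam r n (j + 1) m + (1 - lam j) * Hdp lam r n (j + 1) m := by ring
    _ ≤ lam j * r j + (1 - lam j) * Hdp lam r n (j + 1) m := by gcongr

theorem exists_isRanking_rev_eq_Hdp {j x : ℕ} (hx : x ≤ n + 1 - j)
    (hlam : ∀ p ∈ Finset.Icc j n, 0 ≤ lam p ∧ lam p ≤ 1) (hr : ∀ p ∈ Finset.Icc j n, 0 ≤ r p)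
    (hanti : AntitoneOn r (Set.Icc j n)) :
    ∃ σ, IsRanking j n x σ ∧ rev lam r σ x = Hdp lam r n j x := by
  rcases x with _ | m
  · exact ⟨id, isRanking_zero j n id, by rw [rev_zero, Hdp_zero]⟩
  have hj : j ≤ n := by omega
  have hjmem : j ∈ Finset.Icc j n := Finset.mem_Icc.mpr ⟨le_rfl, hj⟩
  have hsub : Finset.Icc (j + 1) n ⊆ Finset.Icc j n := Finset.Icc_subset_Icc (by omega) le_rfl
  have ih : ∀ x ≤ n + 1 - (j + 1), ∃ σ, IsRanking (j + 1) n x σ ∧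
      rev lam r σ x = Hdp lam r n (j + 1) x := fun x hx =>
    exists_isRanking_rev_eq_Hdp hx (fun p hp => hlam p (hsub hp)) (fun p hp => hr p (hsub hp))
      (hanti.mono (Set.Icc_subset_Icc (by omega) le_rfl))
  rw [Hdp_succ _ hj]
  by_cases htake :
      Hdp lam r n (j + 1) (m + 1) ≤ lam j * r j + (1 - lam j) * Hdp lam r n (j + 1) m
  · obtain ⟨τ, hτ, hτrev⟩ := ih m (by omega)
    refine ⟨Stream'.cons j τ, isRanking_succ_iff.mpr ⟨hjmem, hτ⟩, ?_⟩
    rw [max_eq_left htake, ← hτrev]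
    exact rev_succ lam r (Stream'.cons j τ) m
  · have hm : m + 1 ≤ n + 1 - (j + 1) := by
      by_contra hm
      refine htake (Hdp_skip_le_take hj (by omega) hlam (hr j hjmem) fun p hp => ?_)
      obtain ⟨hjp, hpn⟩ := Finset.mem_Icc.mp hp
      exact hanti ⟨le_rfl, hj⟩ ⟨by omega, hpn⟩ (by omega)
    obtain ⟨σ, hσ, hσrev⟩ := ih (m + 1) hm
    exact ⟨σ, hσ.mono j.le_succ, by rw [hσrev, max_eq_right (not_le.mp htake).le]⟩
termination_by n + 1 - j

end Hdp

theorem stmt16_general (n j x : ℕ) (lam r : ℕ → ℝ)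
    (hlam : ∀ p ∈ Finset.Icc 1 n, 0 < lam p ∧ lam p ≤ 1)
    (hr : ∀ p ∈ Finset.Icc 1 n, 0 < r p)
    (hrdesc : ∀ i, 1 ≤ i → i < n → r (i + 1) ≤ r i)
    (hj : 1 ≤ j) (hjn : j ≤ n) (hxn : x ≤ n - j + 1) :
    IsGreatest {v | ∃ σ : ℕ → ℕ, StrictMonoOn σ (Set.Iio x) ∧
      (∀ i < x, σ i ∈ Finset.Icc j n) ∧ v = rev lam r σ x} (Hdp lam r n j x) := by
  have hsub : Finset.Icc j n ⊆ Finset.Icc 1 n := Finset.Icc_subset_Icc hj le_rfl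
  have hanti : AntitoneOn r (Set.Icc j n) :=
    antitoneOn_of_succ_le Set.ordConnected_Icc fun i _ hi hsi => by
      simp only [Set.mem_Icc, Order.succ_eq_add_one] at hi hsi ⊢
      exact hrdesc i (by omega) (by omega)
  obtain ⟨σ, hσ, hσrev⟩ := exists_isRanking_rev_eq_Hdp (x := x) (by omega)
    (fun p hp => ⟨(hlam p (hsub hp)).1.le, (hlam p (hsub hp)).2⟩)
    (fun p hp => (hr p (hsub hp)).le) hanti
  refine ⟨⟨σ, hσ.1, hσ.2, hσrev.symm⟩, ?_⟩
  rintro v ⟨τ, hτmono, hτmem, rfl⟩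
  exact rev_le_Hdp (fun p hp => (hlam p (hsub hp)).2) ⟨hτmono, hτmem⟩

/-- The DP value `H_j^x` is the maximum of `R(σ,x)` over rankings of `x` products from
`{j,…,n}` displayed in increasing index order. -/
theorem stmt16 (n j x : ℕ) (lam r : ℕ → ℝ)
    (hlam : ∀ p ∈ Finset.Icc 1 n, 0 < lam p ∧ lam p ≤ 1)
    (hr : ∀ p ∈ Finset.Icc 1 n, 0 < r p)
    (hrdesc : ∀ i, 1 ≤ i → i < n → r (i + 1) ≤ r i)
    (hj : 1 ≤ j) (hjn : j ≤ n) (hx : 1 ≤ x) (hxn : x ≤ n - j + 1) :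
    IsGreatest {v | ∃ σ : ℕ → ℕ, StrictMonoOn σ (Set.Iio x) ∧
      (∀ i < x, σ i ∈ Finset.Icc j n) ∧ v = rev lam r σ x} (Hdp lam r n j x) :=
  stmt16_general n j x lam r hlam hr hrdesc hj hjn hxn
end

section
/- Let u, λ ∈ [0,1]^M with u_k ≥ λ_k for all k, and h^L, h* ∈ [0,1]^M with h^L_k ≤ h*_k for all k. Define G^U_k = Π_{i=1}^{k−1}(1 − h^L_i) and G*_k = Π_{i=1}^{k−1}(1 − h*_i). Then for any r ∈ [0, r_max]^M, Σ_{k=1}^{M} ( Π_{i=1}^{k−1}(1−u_i) · u_k · G^U_k − Π_{i=1}^{k−1}(1−λ_i) · λ_k · G*_k ) r_k ≤ r_max · Σ_{k=1}^{M} ( Π_{i=1}^{k−1}(1−λ_i)(1−h*_i) ) · ( (h*_k − h^L_k) + (u_k − λ_k) ). -/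
/-!
Write `c = (1 - u)(1 - h^L)` and `d = (1 - λ)(1 - h*)` for the per-position continuation
probabilities of the optimistic and the true cascade, so that each revenue is a sum
`∑ₖ (∏_{i<k} cᵢ) wₖ`. Peeling off the first position, the difference of two such sums is
`(c₀ - d₀) · (optimistic value of the tail) + d₀ · (difference on the tail)`. The optimistic
tail value lies in `[0, r_max]` and `c₀ - d₀ ≤ h*₀ - h^L₀`, so induction on the number of
positions bounds the hazard-rate part of the error; the purchase-probability part
`(u - λ) r` is bounded termwise.
-/

open Finset

/-- Value of a cascade that is reached at position `k` with probability `∏_{i<k} c i` and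
collects `w k` there. -/
noncomputable def cascadeValue (c w : ℕ → ℝ) (M : ℕ) : ℝ :=
  ∑ k ∈ range M, (∏ i ∈ range k, c i) * w k

theorem cascadeValue_zero (c w : ℕ → ℝ) : cascadeValue c w 0 = 0 := by
  simp [cascadeValue]

theorem cascadeValue_succ (c w : ℕ → ℝ) (M : ℕ) :
    cascadeValue c w (M + 1)
      = w 0 + c 0 * cascadeValue (fun i ↦ c (i + 1)) (fun i ↦ w (i + 1)) M := by
  simp only [cascadeValue, sum_range_succ', prod_range_succ', prod_range_zero, mul_sum]
  rw [add_comm]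
  refine congrArg₂ _ (by ring) (sum_congr rfl fun k _ ↦ by ring)

theorem cascadeValue_nonneg {c w : ℕ → ℝ} (hc : ∀ k, 0 ≤ c k) (hw : ∀ k, 0 ≤ w k) (M : ℕ) :
    0 ≤ cascadeValue c w M :=
  sum_nonneg fun k _ ↦ mul_nonneg (prod_nonneg fun i _ ↦ hc i) (hw k)

theorem cascadeValue_mul_le {c x r : ℕ → ℝ} {R : ℝ} (hc : ∀ k, 0 ≤ c k) (hx : ∀ k, 0 ≤ x k)
    (hr : ∀ k, r k ≤ R) (M : ℕ) :
    cascadeValue c (fun k ↦ x k * r k) M ≤ R * cascadeValue c x M := by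
  rw [cascadeValue, cascadeValue, mul_sum]
  refine sum_le_sum fun k _ ↦ ?_
  rw [← mul_assoc, mul_comm R]
  exact mul_le_mul_of_nonneg_left (hr k) (mul_nonneg (prod_nonneg fun i _ ↦ hc i) (hx k))

theorem cascadeValue_le {c u r : ℕ → ℝ} {R : ℝ} (hc : ∀ k, 0 ≤ c k) (hu : ∀ k, 0 ≤ u k)
    (hcu : ∀ k, c k + u k ≤ 1) (hr0 : ∀ k, 0 ≤ r k) (hrR : ∀ k, r k ≤ R) (M : ℕ) :
    cascadeValue c (fun k ↦ u k * r k) M ≤ R := by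
  have hR : 0 ≤ R := (hr0 0).trans (hrR 0)
  induction M generalizing c u r with
  | zero => simpa [cascadeValue_zero] using hR
  | succ M ih =>
    rw [cascadeValue_succ]
    have htail := ih (fun k ↦ hc (k + 1)) (fun k ↦ hu (k + 1)) (fun k ↦ hcu (k + 1))
      (fun k ↦ hr0 (k + 1)) (fun k ↦ hrR (k + 1))
    nlinarith [hc 0, hu 0, hcu 0, hrR 0, mul_le_mul_of_nonneg_left htail (hc 0)]

theorem cascadeValue_sub_le {c d e u r : ℕ → ℝ} {R : ℝ} (hc : ∀ k, 0 ≤ c k)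
    (hu : ∀ k, 0 ≤ u k) (hcu : ∀ k, c k + u k ≤ 1) (hr0 : ∀ k, 0 ≤ r k) (hrR : ∀ k, r k ≤ R)
    (hd : ∀ k, 0 ≤ d k) (he : ∀ k, 0 ≤ e k) (hcd : ∀ k, c k ≤ d k + e k) (M : ℕ) :
    cascadeValue c (fun k ↦ u k * r k) M - cascadeValue d (fun k ↦ u k * r k) M
      ≤ R * cascadeValue d e M := by
  induction M generalizing c d e u r with
  | zero => simp [cascadeValue_zero]
  | succ M ih =>
    simp only [cascadeValue_succ]
    set Vc := cascadeValue (fun i ↦ c (i + 1)) (fun i ↦ u (i + 1) * r (i + 1)) M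
    set Vd := cascadeValue (fun i ↦ d (i + 1)) (fun i ↦ u (i + 1) * r (i + 1)) M
    set Ve := cascadeValue (fun i ↦ d (i + 1)) (fun i ↦ e (i + 1)) M
    have hVc0 : 0 ≤ Vc := cascadeValue_nonneg (fun k ↦ hc (k + 1))
      (fun k ↦ mul_nonneg (hu (k + 1)) (hr0 (k + 1))) M
    have hVcR : Vc ≤ R := cascadeValue_le (fun k ↦ hc (k + 1)) (fun k ↦ hu (k + 1))
      (fun k ↦ hcu (k + 1)) (fun k ↦ hr0 (k + 1)) (fun k ↦ hrR (k + 1)) M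
    have htail : Vc - Vd ≤ R * Ve := ih (fun k ↦ hc (k + 1)) (fun k ↦ hu (k + 1))
      (fun k ↦ hcu (k + 1)) (fun k ↦ hr0 (k + 1)) (fun k ↦ hrR (k + 1)) (fun k ↦ hd (k + 1))
      (fun k ↦ he (k + 1)) (fun k ↦ hcd (k + 1))
    have hhead : (c 0 - d 0) * Vc ≤ e 0 * R :=
      calc (c 0 - d 0) * Vc ≤ e 0 * Vc := by nlinarith [hcd 0]
        _ ≤ e 0 * R := mul_le_mul_of_nonneg_left hVcR (he 0)
    nlinarith [mul_le_mul_of_nonneg_left htail (hd 0)]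

/-- Error decomposition for RankUCB: the revenue gap between the optimistic model
`(u, h^L)` and the true model `(λ, h*)` is bounded by the per-position estimation
errors weighted by the reach probabilities of the true process. -/
theorem stmt17 (M : ℕ) (rmax : ℝ) (u lam hL hstar r : ℕ → ℝ)
    (hlam0 : ∀ k, 0 ≤ lam k) (hlu : ∀ k, lam k ≤ u k) (hu1 : ∀ k, u k ≤ 1)
    (hhL0 : ∀ k, 0 ≤ hL k) (hLs : ∀ k, hL k ≤ hstar k) (hs1 : ∀ k, hstar k ≤ 1)
    (hr0 : ∀ k, 0 ≤ r k) (hrmax : ∀ k, r k ≤ rmax) :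
    ∑ k ∈ Finset.range M,
        ((∏ i ∈ Finset.range k, (1 - u i)) * u k * (∏ i ∈ Finset.range k, (1 - hL i))
          - (∏ i ∈ Finset.range k, (1 - lam i)) * lam k * (∏ i ∈ Finset.range k, (1 - hstar i)))
          * r k
      ≤ rmax * ∑ k ∈ Finset.range M,
          (∏ i ∈ Finset.range k, (1 - lam i) * (1 - hstar i))
            * ((hstar k - hL k) + (u k - lam k)) := by
  set c : ℕ → ℝ := fun i ↦ (1 - u i) * (1 - hL i)
  set d : ℕ → ℝ := fun i ↦ (1 - lam i) * (1 - hstar i)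
  have hd : ∀ k, 0 ≤ d k := fun k ↦
    mul_nonneg (by linarith [hlu k, hu1 k]) (by linarith [hs1 k])
  have hhazard := cascadeValue_sub_le (c := c) (d := d) (e := fun k ↦ hstar k - hL k)
    (fun k ↦ mul_nonneg (by linarith [hu1 k]) (by linarith [hLs k, hs1 k]))
    (fun k ↦ (hlam0 k).trans (hlu k)) (fun k ↦ by nlinarith [hu1 k, hhL0 k]) hr0 hrmax hd
    (fun k ↦ by linarith [hLs k]) (fun k ↦ by nlinarith [hlu k, hu1 k, hlam0 k, hLs k, hs1 k]) M
  have hpurchase := cascadeValue_mul_le (x := fun k ↦ u k - lam k) hd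
    (fun k ↦ by linarith [hlu k]) hrmax M
  have hlhs : ∑ k ∈ range M,
        ((∏ i ∈ range k, (1 - u i)) * u k * (∏ i ∈ range k, (1 - hL i))
          - (∏ i ∈ range k, (1 - lam i)) * lam k * (∏ i ∈ range k, (1 - hstar i))) * r k
      = cascadeValue c (fun k ↦ u k * r k) M - cascadeValue d (fun k ↦ u k * r k) M
        + cascadeValue d (fun k ↦ (u k - lam k) * r k) M := by
    simp only [cascadeValue, c, d, prod_mul_distrib, ← sum_sub_distrib, ← sum_add_distrib]
    exact sum_congr rfl fun k _ ↦ by ring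
  have hrhs : ∑ k ∈ range M, (∏ i ∈ range k, (1 - lam i) * (1 - hstar i))
        * ((hstar k - hL k) + (u k - lam k))
      = cascadeValue d (fun k ↦ hstar k - hL k) M + cascadeValue d (fun k ↦ u k - lam k) M := by
    simp only [cascadeValue, d, mul_add, sum_add_distrib]
  rw [hlhs, hrhs]
  linarith
end
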